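/- arXiv:2308.04918 — 2 statements merged into one kernel-verified Lean document; each statement's English description precedes it below -/
import Mathlib

section
/- For every q ∈ [1,2) there exists a constant C_q > 0 such that for every square-integrable v : ℝ → ℂ and all continuously differentiable f, g : ℝ → ℂ with f, f', g, g' square-integrable, ∫_ℝ |v(x)|^q |f(x)| |g(x)| dx ≤ C_q ‖v‖^q ‖f‖^{2−q} ‖f‖_{H¹}^{q−1} ‖g‖_{H¹}. -/
/-!
The one-dimensional Sobolev embedding `‖f‖_∞ ≤ ‖f‖_{H¹}` (from `‖f x‖² = -∫_x^∞ 2⟪f, f'⟫`)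
bounds `|f|^{q-1} |g|` pointwise by `‖f‖_{H¹}^{q-1} ‖g‖_{H¹}`, and the remaining integral
`∫ |v|^q |f|^{2-q} = ∫ (|v|²)^{q/2} (|f|²)^{1-q/2}` is at most `‖v‖^q ‖f‖^{2-q}` by
Hölder's inequality.
-/

open MeasureTheory Filter Topology Set

/-- The `L²(ℝ;ℂ)` norm of a function, `‖f‖ = (∫ ‖f(x)‖² dx)^{1/2}`. -/
noncomputable def L2norm (f : ℝ → ℂ) : ℝ := Real.sqrt (∫ x, ‖f x‖ ^ 2)

/-- The `H¹(ℝ;ℂ)` norm of a function, `‖f‖_{H¹} = (‖f‖² + ‖f'‖²)^{1/2}`. -/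
noncomputable def H1norm (f : ℝ → ℂ) : ℝ :=
  Real.sqrt ((∫ x, ‖f x‖ ^ 2) + ∫ x, ‖deriv f x‖ ^ 2)

theorem norm_rpow_eq_sq_rpow {E : Type*} [NormedAddCommGroup E] (u : E) (r : ℝ) :
    ‖u‖ ^ r = (‖u‖ ^ 2) ^ (r / 2) := by
  rw [← Real.rpow_natCast_mul (norm_nonneg u)]
  ring_nf

section Holder

variable {α : Type*} [MeasurableSpace α] {μ : Measure α} {F G : α → ℝ} {a b : ℝ}

theorem MeasureTheory.Integrable.rpow_mul_rpow (hF : Integrable F μ) (hG : Integrable G μ)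
    (hF0 : 0 ≤ F) (hG0 : 0 ≤ G) (ha : 0 ≤ a) (hb : 0 ≤ b) (hab : a + b = 1) :
    Integrable (fun x => F x ^ a * G x ^ b) μ := by
  refine ((hF.const_mul a).add (hG.const_mul b)).mono'
    ((hF.aemeasurable.pow_const a).mul (hG.aemeasurable.pow_const b)).aestronglyMeasurable
    (Eventually.of_forall fun x => ?_)
  rw [Real.norm_of_nonneg (mul_nonneg (Real.rpow_nonneg (hF0 x) a) (Real.rpow_nonneg (hG0 x) b))]
  exact Real.geom_mean_le_arith_mean2_weighted ha hb (hF0 x) (hG0 x) hab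

theorem integral_rpow_mul_rpow_le (hF : Integrable F μ) (hG : Integrable G μ) (hF0 : 0 ≤ F)
    (hG0 : 0 ≤ G) (ha : 0 ≤ a) (hb : 0 ≤ b) (hab : a + b = 1) :
    ∫ x, F x ^ a * G x ^ b ∂μ ≤ (∫ x, F x ∂μ) ^ a * (∫ x, G x ∂μ) ^ b := by
  have hFG0 : 0 ≤ fun x => F x ^ a * G x ^ b := fun x =>
    mul_nonneg (Real.rpow_nonneg (hF0 x) a) (Real.rpow_nonneg (hG0 x) b)
  have hIF0 : 0 ≤ ∫ x, F x ∂μ := integral_nonneg hF0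
  have hIG0 : 0 ≤ ∫ x, G x ∂μ := integral_nonneg hG0
  refine (ENNReal.ofReal_le_ofReal_iff (by positivity)).1 ?_
  calc ENNReal.ofReal (∫ x, F x ^ a * G x ^ b ∂μ)
      = ∫⁻ x, ENNReal.ofReal (F x) ^ a * ENNReal.ofReal (G x) ^ b ∂μ := by
        rw [ofReal_integral_eq_lintegral_ofReal (hF.rpow_mul_rpow hG hF0 hG0 ha hb hab)
          (Eventually.of_forall hFG0)]
        refine lintegral_congr fun x => ?_
        rw [ENNReal.ofReal_mul (Real.rpow_nonneg (hF0 x) a),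
          ENNReal.ofReal_rpow_of_nonneg (hF0 x) ha, ENNReal.ofReal_rpow_of_nonneg (hG0 x) hb]
    _ ≤ (∫⁻ x, ENNReal.ofReal (F x) ∂μ) ^ a * (∫⁻ x, ENNReal.ofReal (G x) ∂μ) ^ b :=
        ENNReal.lintegral_mul_norm_pow_le hF.aemeasurable.ennreal_ofReal
          hG.aemeasurable.ennreal_ofReal ha hb hab
    _ = ENNReal.ofReal ((∫ x, F x ∂μ) ^ a * (∫ x, G x ∂μ) ^ b) := by
        rw [← ofReal_integral_eq_lintegral_ofReal hF (Eventually.of_forall hF0),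
          ← ofReal_integral_eq_lintegral_ofReal hG (Eventually.of_forall hG0),
          ENNReal.ofReal_rpow_of_nonneg hIF0 ha, ENNReal.ofReal_rpow_of_nonneg hIG0 hb,
          ← ENNReal.ofReal_mul (Real.rpow_nonneg hIF0 a)]

variable {E : Type*} [NormedAddCommGroup E] {u w : α → E} {q : ℝ}

theorem MeasureTheory.MemLp.integrable_norm_rpow_mul_norm_rpow (hu : MemLp u 2 μ)
    (hw : MemLp w 2 μ) (hq0 : 0 ≤ q) (hq2 : q ≤ 2) :
    Integrable (fun x => ‖u x‖ ^ q * ‖w x‖ ^ (2 - q)) μ := by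
  simp only [norm_rpow_eq_sq_rpow _ q, norm_rpow_eq_sq_rpow _ (2 - q)]
  exact (hu.integrable_norm_pow two_ne_zero).rpow_mul_rpow (hw.integrable_norm_pow two_ne_zero)
    (fun x => by positivity) (fun x => by positivity) (by linarith) (by linarith) (by ring)

theorem integral_norm_rpow_mul_norm_rpow_le (hu : MemLp u 2 μ) (hw : MemLp w 2 μ) (hq0 : 0 ≤ q)
    (hq2 : q ≤ 2) :
    ∫ x, ‖u x‖ ^ q * ‖w x‖ ^ (2 - q) ∂μ ≤
      (∫ x, ‖u x‖ ^ 2 ∂μ) ^ (q / 2) * (∫ x, ‖w x‖ ^ 2 ∂μ) ^ ((2 - q) / 2) := by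
  simp only [norm_rpow_eq_sq_rpow _ q, norm_rpow_eq_sq_rpow _ (2 - q)]
  exact integral_rpow_mul_rpow_le (hu.integrable_norm_pow two_ne_zero)
    (hw.integrable_norm_pow two_ne_zero) (fun x => by positivity) (fun x => by positivity)
    (by linarith) (by linarith) (by ring)

end Holder

theorem norm_sq_le_integral_norm_sq_add_integral_norm_deriv_sq {E : Type*}
    [NormedAddCommGroup E] [InnerProductSpace ℝ E] {f : ℝ → E} (hf : Differentiable ℝ f)
    (hf2 : MemLp f 2 volume) (hf'2 : MemLp (deriv f) 2 volume) (x : ℝ) :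
    ‖f x‖ ^ 2 ≤ (∫ y, ‖f y‖ ^ 2) + ∫ y, ‖deriv f y‖ ^ 2 := by
  set D : ℝ → ℝ := fun y => 2 * inner ℝ (f y) (deriv f y)
  have hD : ∀ y, HasDerivAt (fun z => ‖f z‖ ^ 2) (D y) y := fun y => (hf y).hasDerivAt.norm_sq
  have hint : Integrable (fun y => ‖f y‖ ^ 2) := hf2.integrable_norm_pow two_ne_zero
  have hint' : Integrable (fun y => ‖deriv f y‖ ^ 2) := hf'2.integrable_norm_pow two_ne_zero
  have hD_le : ∀ y, |D y| ≤ ‖f y‖ ^ 2 + ‖deriv f y‖ ^ 2 := fun y => by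
    calc |D y| = 2 * |inner ℝ (f y) (deriv f y)| := by rw [abs_mul, abs_two]
      _ ≤ 2 * ‖f y‖ * ‖deriv f y‖ := by
        rw [mul_assoc]; gcongr; exact abs_real_inner_le_norm _ _
      _ ≤ ‖f y‖ ^ 2 + ‖deriv f y‖ ^ 2 := two_mul_le_add_sq _ _
  have hD_int : Integrable D := (hint.add hint').mono'
    ((hf2.1.inner hf'2.1).const_mul 2) (Eventually.of_forall hD_le)
  have hlim : Tendsto (fun z => ‖f z‖ ^ 2) atTop (𝓝 0) :=
    tendsto_zero_of_hasDerivAt_of_integrableOn_Ioi (a := 0) (fun y _ => hD y)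
      hD_int.integrableOn hint.integrableOn
  have hFTC : ∫ y in Ioi x, D y = 0 - ‖f x‖ ^ 2 :=
    integral_Ioi_of_hasDerivAt_of_tendsto' (fun y _ => hD y) hD_int.integrableOn hlim
  calc ‖f x‖ ^ 2 = -∫ y in Ioi x, D y := by rw [hFTC]; ring
    _ ≤ ∫ y in Ioi x, |D y| := by
        rw [← integral_neg]
        exact integral_mono hD_int.integrableOn.neg hD_int.abs.integrableOn
          fun y => neg_le_abs (D y)
    _ ≤ ∫ y, |D y| :=
        setIntegral_le_integral hD_int.abs (Eventually.of_forall fun y => abs_nonneg _)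
    _ ≤ ∫ y, (‖f y‖ ^ 2 + ‖deriv f y‖ ^ 2) := integral_mono hD_int.abs (hint.add hint') hD_le
    _ = (∫ y, ‖f y‖ ^ 2) + ∫ y, ‖deriv f y‖ ^ 2 := integral_add hint hint'

theorem norm_le_H1norm {f : ℝ → ℂ} (hf : Differentiable ℝ f) (hf2 : MemLp f 2 volume)
    (hf'2 : MemLp (deriv f) 2 volume) (x : ℝ) : ‖f x‖ ≤ H1norm f :=
  Real.le_sqrt_of_sq_le (norm_sq_le_integral_norm_sq_add_integral_norm_deriv_sq hf hf2 hf'2 x)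

theorem L2norm_rpow (f : ℝ → ℂ) (r : ℝ) : L2norm f ^ r = (∫ x, ‖f x‖ ^ 2) ^ (r / 2) := by
  rw [L2norm, Real.sqrt_eq_rpow, ← Real.rpow_mul (integral_nonneg fun x => by positivity)]
  ring_nf

theorem le_rpow_two_sub_mul_rpow_sub_one_of_le {t M q : ℝ} (ht : 0 ≤ t) (htM : t ≤ M)
    (hq : 1 ≤ q) :
    t ≤ t ^ (2 - q) * M ^ (q - 1) :=
  calc t = t ^ (2 - q) * t ^ (q - 1) := by
        rw [← Real.rpow_add' ht (by norm_num)]; norm_num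
    _ ≤ t ^ (2 - q) * M ^ (q - 1) := by gcongr

/-- For every `q ∈ [1,2)` there is `C_q > 0` such that for every
square-integrable `v : ℝ → ℂ` and all `C¹` functions `f, g : ℝ → ℂ` with `f, f', g, g'`
square-integrable, `∫ |v|^q |f| |g| ≤ C_q ‖v‖^q ‖f‖^{2−q} ‖f‖_{H¹}^{q−1} ‖g‖_{H¹}`. -/
theorem trilinear_weighted_estimate (q : ℝ) (hq1 : 1 ≤ q) (hq2 : q < 2) :
    ∃ C > (0 : ℝ), ∀ v f g : ℝ → ℂ,
      MemLp v 2 volume →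
      ContDiff ℝ 1 f → MemLp f 2 volume → MemLp (deriv f) 2 volume →
      ContDiff ℝ 1 g → MemLp g 2 volume → MemLp (deriv g) 2 volume →
      (∫ x, ‖v x‖ ^ q * ‖f x‖ * ‖g x‖) ≤
        C * L2norm v ^ q * L2norm f ^ (2 - q) * H1norm f ^ (q - 1) * H1norm g := by
  refine ⟨1, one_pos, fun v f g hv hf hf2 hf'2 hg hg2 hg'2 => ?_⟩
  set M := H1norm f ^ (q - 1) * H1norm g
  have hM : 0 ≤ M := by unfold M H1norm; positivity
  have hpoint : ∀ x, ‖v x‖ ^ q * ‖f x‖ * ‖g x‖ ≤ M * (‖v x‖ ^ q * ‖f x‖ ^ (2 - q)) := by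
    intro x
    have hfx := le_rpow_two_sub_mul_rpow_sub_one_of_le (norm_nonneg _)
      (norm_le_H1norm (hf.differentiable one_ne_zero) hf2 hf'2 x) hq1
    have hgx := norm_le_H1norm (hg.differentiable one_ne_zero) hg2 hg'2 x
    calc ‖v x‖ ^ q * ‖f x‖ * ‖g x‖
        ≤ ‖v x‖ ^ q * (‖f x‖ ^ (2 - q) * H1norm f ^ (q - 1)) * H1norm g := by
          gcongr
          exact mul_nonneg (by positivity) ((norm_nonneg _).trans hfx)
      _ = M * (‖v x‖ ^ q * ‖f x‖ ^ (2 - q)) := by ring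
  calc (∫ x, ‖v x‖ ^ q * ‖f x‖ * ‖g x‖)
      ≤ ∫ x, M * (‖v x‖ ^ q * ‖f x‖ ^ (2 - q)) :=
        integral_mono_of_nonneg (Eventually.of_forall fun x => by positivity)
          ((hv.integrable_norm_rpow_mul_norm_rpow hf2 (by linarith) hq2.le).const_mul M)
          (Eventually.of_forall hpoint)
    _ = M * ∫ x, ‖v x‖ ^ q * ‖f x‖ ^ (2 - q) := integral_const_mul _ _
    _ ≤ M * (L2norm v ^ q * L2norm f ^ (2 - q)) := by
        rw [L2norm_rpow, L2norm_rpow]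
        exact mul_le_mul_of_nonneg_left
          (integral_norm_rpow_mul_norm_rpow_le hv hf2 (by linarith) hq2.le) hM
    _ = 1 * L2norm v ^ q * L2norm f ^ (2 - q) * H1norm f ^ (q - 1) * H1norm g := by ring
end

section
/- Let q ∈ (1,2), let N ≥ 1 be an integer, and let e_1,…,e_N : ℝ → ℂ be square-integrable functions that are also (essentially) bounded, with ‖e_j‖_∞ ≤ B for 1 ≤ j ≤ N. Then there is a constant C > 0 depending only on q, N, B such that for all continuously differentiable u, v : ℝ → ℂ with u, u', v, v' square-integrable, Σ_{j=1}^N ⟨ |v|^q v − |u|^q u , e_j ⟩² ≤ C ‖u − v‖² ( ‖u‖_{H¹}² + ‖v‖_{H¹}² + ‖u‖^{2/(2−q)} + ‖v‖^{2/(2−q)} ), where ⟨F, e_j⟩ := Re ∫_ℝ F(x) conj(e_j(x)) dx (well defined since the integrand is integrable). -/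
open MeasureTheory

/-!
Pointwise, `|b|^q b - |a|^q a = |b|^q (b - a) + (|b|^q - |a|^q) a` and the mean value theorem
give `||b|^q b - |a|^q a| ≤ (1 + q)(|a|^q + |b|^q)|a - b|`. In one dimension
`‖u‖_∞² ≤ ‖u‖² + ‖u'‖²` (integrate `(|u|²)' = 2 Re(conj u · u')` from `x` to `∞`), so
`|u|^q ≤ ‖u‖_{H¹}^{q-1} |u|`. With `|e_j| ≤ B` and Cauchy–Schwarz every coefficient is at most
`B (1 + q)(‖u‖_{H¹}^{q-1}‖u‖ + ‖v‖_{H¹}^{q-1}‖v‖)‖u - v‖`, and Young's inequality with the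
conjugate exponents `1/(q-1)`, `1/(2-q)` bounds `‖u‖_{H¹}^{2(q-1)}‖u‖²` by
`‖u‖_{H¹}² + ‖u‖^{2/(2-q)}`.
-/

open Filter Set

namespace Real

lemma abs_rpow_sub_rpow_le {q x y : ℝ} (hq : 1 ≤ q) (hx : 0 ≤ x) (hy : 0 ≤ y) :
    |x ^ q - y ^ q| ≤ q * max x y ^ (q - 1) * |x - y| := by
  refine (convex_Icc 0 (max x y)).norm_image_sub_le_of_norm_hasDerivWithin_le
    (f := fun t => t ^ q) (fun t _ => (hasDerivAt_rpow_const (Or.inr hq)).hasDerivWithinAt)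
    (fun t ht => ?_) ⟨hy, le_max_right x y⟩ ⟨hx, le_max_left x y⟩
  rw [norm_of_nonneg (mul_nonneg (by linarith) (rpow_nonneg ht.1 _))]
  exact mul_le_mul_of_nonneg_left (rpow_le_rpow ht.1 ht.2 (by linarith)) (by linarith)

lemma rpow_eq_rpow_sub_one_mul {q x : ℝ} (hq : q ≠ 0) (hx : 0 ≤ x) :
    x ^ q = x ^ (q - 1) * x := by
  rw [← rpow_add_one' hx (by simpa using hq), sub_add_cancel]

lemma rpow_le_rpow_sub_one_mul_of_le {q x M : ℝ} (hq : 1 ≤ q) (hx : 0 ≤ x) (hxM : x ≤ M) :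
    x ^ q ≤ M ^ (q - 1) * x := by
  rw [rpow_eq_rpow_sub_one_mul (by linarith) hx]
  gcongr

lemma rpow_sub_one_mul_sq_le_add {q H L : ℝ} (hq1 : 1 ≤ q) (hq2 : q < 2) (hH : 0 ≤ H)
    (hL : 0 ≤ L) : (H ^ (q - 1) * L) ^ 2 ≤ H ^ 2 + L ^ (2 / (2 - q)) := by
  have amgm := geom_mean_le_arith_mean2_weighted (w₁ := q - 1) (w₂ := 2 - q)
    (p₁ := H ^ 2) (p₂ := L ^ (2 / (2 - q))) (by linarith) (by linarith) (by positivity)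
    (by positivity) (by ring)
  have hH' : (H ^ 2) ^ (q - 1) = (H ^ (q - 1)) ^ 2 := by
    rw [← rpow_natCast, ← rpow_natCast, ← rpow_mul hH, ← rpow_mul hH, mul_comm]
  have hL' : (L ^ (2 / (2 - q))) ^ (2 - q) = L ^ 2 := by
    rw [← rpow_mul hL, div_mul_cancel₀ _ (by linarith), rpow_two]
  rw [hH', hL'] at amgm
  nlinarith [sq_nonneg H, rpow_nonneg hL (2 / (2 - q))]

end Real

lemma norm_rpow_smul_sub_rpow_smul_le {E : Type*} [NormedAddCommGroup E] [NormedSpace ℝ E]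
    {q : ℝ} (hq : 1 ≤ q) (a b : E) :
    ‖‖b‖ ^ q • b - ‖a‖ ^ q • a‖ ≤ (1 + q) * (‖a‖ ^ q + ‖b‖ ^ q) * ‖a - b‖ := by
  set m := max ‖a‖ ‖b‖
  have hm : m ^ (q - 1) * ‖a‖ ≤ ‖a‖ ^ q + ‖b‖ ^ q := by
    calc m ^ (q - 1) * ‖a‖ ≤ m ^ (q - 1) * m := by gcongr; exact le_max_left _ _
      _ = m ^ q := (Real.rpow_eq_rpow_sub_one_mul (by linarith) (by positivity)).symm
      _ ≤ ‖a‖ ^ q + ‖b‖ ^ q := by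
        rcases max_cases ‖a‖ ‖b‖ with ⟨h, -⟩ | ⟨h, -⟩ <;>
          simp only [m, h, le_add_iff_nonneg_right, le_add_iff_nonneg_left] <;> positivity
  have hdiff : |‖b‖ ^ q - ‖a‖ ^ q| ≤ q * m ^ (q - 1) * ‖a - b‖ := by
    calc |‖b‖ ^ q - ‖a‖ ^ q| ≤ q * max ‖b‖ ‖a‖ ^ (q - 1) * |‖b‖ - ‖a‖| :=
          Real.abs_rpow_sub_rpow_le hq (norm_nonneg b) (norm_nonneg a)
      _ ≤ q * m ^ (q - 1) * ‖a - b‖ := by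
          rw [max_comm, abs_sub_comm]
          gcongr
          exact abs_norm_sub_norm_le a b
  calc ‖‖b‖ ^ q • b - ‖a‖ ^ q • a‖ = ‖‖b‖ ^ q • (b - a) + (‖b‖ ^ q - ‖a‖ ^ q) • a‖ := by
        rw [smul_sub, sub_smul]; abel_nf
    _ ≤ ‖b‖ ^ q * ‖a - b‖ + |‖b‖ ^ q - ‖a‖ ^ q| * ‖a‖ := by
        refine (norm_add_le _ _).trans_eq ?_
        rw [norm_smul, norm_smul, Real.norm_of_nonneg (by positivity), Real.norm_eq_abs,
          norm_sub_rev]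
    _ ≤ ‖b‖ ^ q * ‖a - b‖ + q * (m ^ (q - 1) * ‖a‖) * ‖a - b‖ := by
        linarith [mul_le_mul_of_nonneg_right hdiff (norm_nonneg a)]
    _ ≤ (‖a‖ ^ q + ‖b‖ ^ q) * ‖a - b‖ + q * (‖a‖ ^ q + ‖b‖ ^ q) * ‖a - b‖ := by
        gcongr
        exact le_add_of_nonneg_left (by positivity)
    _ = (1 + q) * (‖a‖ ^ q + ‖b‖ ^ q) * ‖a - b‖ := by ring

lemma integral_norm_mul_norm_le {α E : Type*} [MeasurableSpace α] {μ : Measure α}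
    [NormedAddCommGroup E] {f g : α → E} (hf : MemLp f 2 μ) (hg : MemLp g 2 μ) :
    ∫ a, ‖f a‖ * ‖g a‖ ∂μ ≤ √(∫ a, ‖f a‖ ^ 2 ∂μ) * √(∫ a, ‖g a‖ ^ 2 ∂μ) := by
  have h := integral_mul_norm_le_Lp_mul_Lq Real.HolderConjugate.two_two
    (by simpa using hf) (by simpa using hg)
  simpa only [Real.rpow_two, Real.sqrt_eq_rpow] using h

lemma abs_two_mul_real_inner_le_norm_sq_add_norm_sq {F : Type*} [NormedAddCommGroup F]
    [InnerProductSpace ℝ F] (x y : F) : |2 * inner ℝ x y| ≤ ‖x‖ ^ 2 + ‖y‖ ^ 2 := by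
  rw [abs_mul, abs_two]
  nlinarith [abs_real_inner_le_norm x y, two_mul_le_add_sq ‖x‖ ‖y‖]

theorem norm_sq_le_integral_norm_sq_add_integral_norm_deriv_sq_s11 {F : Type*}
    [NormedAddCommGroup F] [InnerProductSpace ℝ F] {u : ℝ → F} (hu : ContDiff ℝ 1 u)
    (hu2 : MemLp u 2 volume) (hu'2 : MemLp (deriv u) 2 volume) (x : ℝ) :
    ‖u x‖ ^ 2 ≤ (∫ t, ‖u t‖ ^ 2) + ∫ t, ‖deriv u t‖ ^ 2 := by
  have hderiv : ∀ t, HasDerivAt (‖u ·‖ ^ 2) (2 * inner ℝ (u t) (deriv u t)) t := fun t =>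
    ((hu.differentiable one_ne_zero) t).hasDerivAt.norm_sq
  have hsq : Integrable (‖u ·‖ ^ 2) := hu2.integrable_norm_pow two_ne_zero
  have hdom : Integrable (fun t => ‖u t‖ ^ 2 + ‖deriv u t‖ ^ 2) :=
    hsq.add (hu'2.integrable_norm_pow two_ne_zero)
  have hint : Integrable (fun t => 2 * inner ℝ (u t) (deriv u t)) := by
    refine hdom.mono' ?_ (Eventually.of_forall fun t => ?_)
    · exact (continuous_const.mul
        (hu.continuous.inner (hu.continuous_deriv le_rfl))).aestronglyMeasurable
    · exact abs_two_mul_real_inner_le_norm_sq_add_norm_sq _ _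
  have hlim : Tendsto (‖u ·‖ ^ 2) atTop (nhds 0) :=
    tendsto_zero_of_hasDerivAt_of_integrableOn_Ioi (a := x) (fun t _ => hderiv t)
      hint.integrableOn hsq.integrableOn
  have hftc := integral_Ioi_of_hasDerivAt_of_tendsto' (a := x) (fun t _ => hderiv t)
    hint.integrableOn hlim
  calc ‖u x‖ ^ 2 = -∫ t in Ioi x, 2 * inner ℝ (u t) (deriv u t) := by rw [hftc]; ring
    _ ≤ ∫ t in Ioi x, |2 * inner ℝ (u t) (deriv u t)| :=
        (neg_le_abs _).trans abs_integral_le_integral_abs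
    _ ≤ ∫ t in Ioi x, ‖u t‖ ^ 2 + ‖deriv u t‖ ^ 2 :=
        setIntegral_mono hint.abs.integrableOn hdom.integrableOn
          fun t => abs_two_mul_real_inner_le_norm_sq_add_norm_sq _ _
    _ ≤ ∫ t, ‖u t‖ ^ 2 + ‖deriv u t‖ ^ 2 :=
        setIntegral_le_integral hdom (Eventually.of_forall fun t => by positivity)
    _ = (∫ t, ‖u t‖ ^ 2) + ∫ t, ‖deriv u t‖ ^ 2 :=
        integral_add hsq (hu'2.integrable_norm_pow two_ne_zero)

lemma norm_le_H1norm_s11 {u : ℝ → ℂ} (hu : ContDiff ℝ 1 u) (hu2 : MemLp u 2 volume)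
    (hu'2 : MemLp (deriv u) 2 volume) (x : ℝ) : ‖u x‖ ≤ H1norm u :=
  Real.le_sqrt_of_sq_le (norm_sq_le_integral_norm_sq_add_integral_norm_deriv_sq_s11 hu hu2 hu'2 x)

section Nonlinearity

variable {q B : ℝ} {e u v : ℝ → ℂ}

lemma abs_re_integral_nonlinearity_mul_conj_le (hq : 1 ≤ q) (he : ∀ᵐ x, ‖e x‖ ≤ B)
    (hu : ContDiff ℝ 1 u) (hu2 : MemLp u 2 volume) (hu'2 : MemLp (deriv u) 2 volume)
    (hv : ContDiff ℝ 1 v) (hv2 : MemLp v 2 volume) (hv'2 : MemLp (deriv v) 2 volume) :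
    |(∫ x, (((‖v x‖ ^ q : ℝ) : ℂ) * v x - ((‖u x‖ ^ q : ℝ) : ℂ) * u x) *
        (starRingEnd ℂ) (e x)).re| ≤
      B * (1 + q) * (H1norm u ^ (q - 1) * L2norm u + H1norm v ^ (q - 1) * L2norm v) *
        L2norm (fun x => u x - v x) := by
  set Hu := H1norm u
  set Hv := H1norm v
  have hw2 : MemLp (fun x => u x - v x) 2 volume := hu2.sub hv2
  obtain ⟨x₀, hx₀⟩ := he.exists
  have hB : 0 ≤ B := (norm_nonneg _).trans hx₀
  have hpointwise : ∀ᵐ x, ‖(((‖v x‖ ^ q : ℝ) : ℂ) * v x - ((‖u x‖ ^ q : ℝ) : ℂ) * u x) *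
      (starRingEnd ℂ) (e x)‖ ≤ B * (1 + q) * (Hu ^ (q - 1) * (‖u x‖ * ‖u x - v x‖) +
        Hv ^ (q - 1) * (‖v x‖ * ‖u x - v x‖)) := by
    filter_upwards [he] with x hex
    rw [norm_mul, RCLike.norm_conj, ← Complex.real_smul, ← Complex.real_smul, mul_comm]
    have hu_pow := Real.rpow_le_rpow_sub_one_mul_of_le hq (norm_nonneg _)
      (norm_le_H1norm_s11 hu hu2 hu'2 x)
    have hv_pow := Real.rpow_le_rpow_sub_one_mul_of_le hq (norm_nonneg _)
      (norm_le_H1norm_s11 hv hv2 hv'2 x)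
    calc ‖e x‖ * ‖‖v x‖ ^ q • v x - ‖u x‖ ^ q • u x‖
        ≤ B * ((1 + q) * (‖u x‖ ^ q + ‖v x‖ ^ q) * ‖u x - v x‖) :=
          mul_le_mul hex (norm_rpow_smul_sub_rpow_smul_le hq _ _) (norm_nonneg _) hB
      _ ≤ B * ((1 + q) * (Hu ^ (q - 1) * ‖u x‖ + Hv ^ (q - 1) * ‖v x‖) * ‖u x - v x‖) := by
          gcongr
      _ = _ := by ring
  have hint : ∀ {f : ℝ → ℂ}, MemLp f 2 volume → Integrable (fun x => ‖f x‖ * ‖u x - v x‖) :=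
    fun hf => hf.norm.integrable_mul hw2.norm
  calc _ ≤ ‖∫ x, (((‖v x‖ ^ q : ℝ) : ℂ) * v x - ((‖u x‖ ^ q : ℝ) : ℂ) * u x) *
        (starRingEnd ℂ) (e x)‖ := Complex.abs_re_le_norm _
    _ ≤ ∫ x, ‖(((‖v x‖ ^ q : ℝ) : ℂ) * v x - ((‖u x‖ ^ q : ℝ) : ℂ) * u x) *
        (starRingEnd ℂ) (e x)‖ := norm_integral_le_integral_norm _
    _ ≤ ∫ x, B * (1 + q) * (Hu ^ (q - 1) * (‖u x‖ * ‖u x - v x‖) +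
        Hv ^ (q - 1) * (‖v x‖ * ‖u x - v x‖)) :=
          integral_mono_of_nonneg (Eventually.of_forall fun x => norm_nonneg _)
            ((((hint hu2).const_mul _).add ((hint hv2).const_mul _)).const_mul _) hpointwise
    _ = B * (1 + q) * (Hu ^ (q - 1) * (∫ x, ‖u x‖ * ‖u x - v x‖) +
        Hv ^ (q - 1) * ∫ x, ‖v x‖ * ‖u x - v x‖) := by
          rw [integral_const_mul, integral_add ((hint hu2).const_mul _) ((hint hv2).const_mul _),
            integral_const_mul, integral_const_mul]
    _ ≤ B * (1 + q) * (Hu ^ (q - 1) * (L2norm u * L2norm (fun x => u x - v x)) +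
        Hv ^ (q - 1) * (L2norm v * L2norm (fun x => u x - v x))) := by
          have hBq : 0 ≤ B * (1 + q) := by positivity
          have hHu : 0 ≤ Hu := Real.sqrt_nonneg _
          have hHv : 0 ≤ Hv := Real.sqrt_nonneg _
          gcongr
          · exact integral_norm_mul_norm_le hu2 hw2
          · exact integral_norm_mul_norm_le hv2 hw2
    _ = _ := by ring

lemma sq_re_integral_nonlinearity_mul_conj_le (hq1 : 1 ≤ q) (hq2 : q < 2)
    (he : ∀ᵐ x, ‖e x‖ ≤ B)
    (hu : ContDiff ℝ 1 u) (hu2 : MemLp u 2 volume) (hu'2 : MemLp (deriv u) 2 volume)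
    (hv : ContDiff ℝ 1 v) (hv2 : MemLp v 2 volume) (hv'2 : MemLp (deriv v) 2 volume) :
    ((∫ x, (((‖v x‖ ^ q : ℝ) : ℂ) * v x - ((‖u x‖ ^ q : ℝ) : ℂ) * u x) *
        (starRingEnd ℂ) (e x)).re) ^ 2 ≤
      2 * (1 + q) ^ 2 * B ^ 2 * (L2norm (fun x => u x - v x) ^ 2 *
        (H1norm u ^ 2 + H1norm v ^ 2 + L2norm u ^ (2 / (2 - q)) + L2norm v ^ (2 / (2 - q)))) := by
  have hYoung : (H1norm u ^ (q - 1) * L2norm u + H1norm v ^ (q - 1) * L2norm v) ^ 2 ≤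
      2 * (H1norm u ^ 2 + H1norm v ^ 2 + L2norm u ^ (2 / (2 - q)) + L2norm v ^ (2 / (2 - q))) :=
    calc _ ≤ 2 * ((H1norm u ^ (q - 1) * L2norm u) ^ 2 + (H1norm v ^ (q - 1) * L2norm v) ^ 2) :=
          add_sq_le
      _ ≤ _ := by
          have hu' := Real.rpow_sub_one_mul_sq_le_add (H := H1norm u) (L := L2norm u) hq1 hq2
            (Real.sqrt_nonneg _) (Real.sqrt_nonneg _)
          have hv' := Real.rpow_sub_one_mul_sq_le_add (H := H1norm v) (L := L2norm v) hq1 hq2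
            (Real.sqrt_nonneg _) (Real.sqrt_nonneg _)
          linarith
  rw [← sq_abs]
  calc _ ≤ (B * (1 + q) * (H1norm u ^ (q - 1) * L2norm u + H1norm v ^ (q - 1) * L2norm v) *
        L2norm (fun x => u x - v x)) ^ 2 := by
        gcongr
        exact abs_re_integral_nonlinearity_mul_conj_le hq1 he hu hu2 hu'2 hv hv2 hv'2
    _ ≤ _ := by
        rw [mul_pow, mul_pow, mul_pow]
        linarith [mul_le_mul_of_nonneg_left hYoung
          (by positivity : 0 ≤ B ^ 2 * (1 + q) ^ 2 * L2norm (fun x => u x - v x) ^ 2)]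

end Nonlinearity

/-- Let `q ∈ (1,2)`, `N ≥ 1`, and let `e_1,…,e_N : ℝ → ℂ` be
square-integrable functions that are essentially bounded by `B`.  There is `C > 0`,
depending only on `q, N, B`, such that for all `C¹` functions `u, v : ℝ → ℂ` with
`u, u', v, v'` square-integrable,
`Σ_j ⟨|v|^q v − |u|^q u, e_j⟩² ≤ C ‖u−v‖² (‖u‖_{H¹}² + ‖v‖_{H¹}² + ‖u‖^{2/(2−q)} + ‖v‖^{2/(2−q)})`,
where `⟨F, e_j⟩ = Re ∫ F(x) conj(e_j(x)) dx`. -/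
theorem projected_nonlinearity_estimate
    (q : ℝ) (hq1 : 1 < q) (hq2 : q < 2) (N : ℕ) (hN : 1 ≤ N) (B : ℝ) :
    ∃ C > (0 : ℝ), ∀ e : Fin N → ℝ → ℂ,
      (∀ j, MemLp (e j) 2 volume) →
      (∀ j, ∀ᵐ x ∂(volume : Measure ℝ), ‖e j x‖ ≤ B) →
      ∀ u v : ℝ → ℂ,
        ContDiff ℝ 1 u → MemLp u 2 volume → MemLp (deriv u) 2 volume →
        ContDiff ℝ 1 v → MemLp v 2 volume → MemLp (deriv v) 2 volume →
        (∑ j : Fin N,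
            ((∫ x, (((‖v x‖ ^ q : ℝ) : ℂ) * v x - ((‖u x‖ ^ q : ℝ) : ℂ) * u x) *
              (starRingEnd ℂ) (e j x)).re) ^ 2) ≤
          C * L2norm (fun x => u x - v x) ^ 2 *
            (H1norm u ^ 2 + H1norm v ^ 2 +
              L2norm u ^ (2 / (2 - q)) + L2norm v ^ (2 / (2 - q))) := by
  have hN0 : (0 : ℝ) < N := by exact_mod_cast hN
  refine ⟨N * (2 * (1 + q) ^ 2 * (B ^ 2 + 1)), by positivity, ?_⟩
  intro e _ heB u v hu hu2 hu'2 hv hv2 hv'2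
  have hR : 0 ≤ L2norm (fun x => u x - v x) ^ 2 *
      (H1norm u ^ 2 + H1norm v ^ 2 + L2norm u ^ (2 / (2 - q)) + L2norm v ^ (2 / (2 - q))) := by
    unfold L2norm H1norm; positivity
  calc _ ≤ ∑ _j : Fin N, 2 * (1 + q) ^ 2 * (B ^ 2 + 1) * (L2norm (fun x => u x - v x) ^ 2 *
        (H1norm u ^ 2 + H1norm v ^ 2 + L2norm u ^ (2 / (2 - q)) + L2norm v ^ (2 / (2 - q)))) := by
        refine Finset.sum_le_sum fun j _ => ?_
        refine (sq_re_integral_nonlinearity_mul_conj_le hq1.le hq2 (heB j)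
          hu hu2 hu'2 hv hv2 hv'2).trans ?_
        gcongr
        linarith
    _ = _ := by simp only [Finset.sum_const, Finset.card_univ, Fintype.card_fin, nsmul_eq_mul]; ring
end
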